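/- Define coefficients λ_k^{(n)} recursively by λ_1^{(n)} = 1 for all n ≥ 1 and λ_{k+1}^{(n)} = Σ_{j=k}^{n-1} C(n,j) λ_k^{(j)} for 1 ≤ k ≤ n-1. Then Γ_n(x, -t, ..., -t) = Σ_{j=1}^{n} λ_j^{(n)} · (1/j!)·C̃_j(x+t, t), where C̃_j are the monic Charlier polynomials defined by e^{-ut}(1+u)^x = Σ_{j≥0} C̃_j(x,t) u^j/j!. -/

import Mathlib

/-- Complete Bell polynomials via the standard recurrence (equivalent to the
exponential formula). -/
noncomputable def bellΓ (x : ℕ → ℝ) : ℕ → ℝ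
  | 0 => 1
  | n + 1 => ∑ j ∈ (Finset.range (n + 1)).attach,
      (n.choose j.1 : ℝ) * bellΓ x j.1 * x (n + 1 - j.1)
  decreasing_by exact Finset.mem_range.mp j.2

/-- `lam k n = λ_k^{(n)}`, defined by `λ_1^{(n)} = 1` and
`λ_{k+1}^{(n)} = ∑_{j=k}^{n-1} C(n,j) λ_k^{(j)}`. -/
noncomputable def lam : ℕ → ℕ → ℝ
  | 0, _ => 0
  | 1, _ => 1
  | k + 2, n => ∑ j ∈ Finset.Icc (k + 1) (n - 1), (n.choose j : ℝ) * lam (k + 1) j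

/-- Monic Charlier polynomials `C̃_n(x,t)`, with generating function
`e^{-ut}(1+u)^x = ∑ C̃_n(x,t) uⁿ/n!`; explicitly
`C̃_n(x,t) = ∑_{k=0}^n C(n,k) (-t)^{n-k} (x)_k` with `(x)_k` the falling factorial. -/
noncomputable def charlierM (n : ℕ) (x t : ℝ) : ℝ :=
  ∑ k ∈ Finset.range (n + 1),
    (n.choose k : ℝ) * (-t) ^ (n - k) * ∏ i ∈ Finset.range k, (x - i)

/-! With `y = x + t`, the Bell recurrence for `B_n = Γ_n(x, -t, …, -t)` reads
`B_{n+1} = x B_n - t ∑_{j<n} C(n,j) B_j`. The sums `F_n(y) = ∑_k S(n,k) C̃_k(y,t)` of Charlier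
polynomials weighted by Stirling numbers of the second kind satisfy the same recurrence: the
binomial recurrence `S(n+1,k+1) = ∑_j C(n,j) S(j,k)` together with
`C̃_{k+1}(y+1) - C̃_{k+1}(y) = (k+1) C̃_k(y)` turns `∑_{j<n} C(n,j) F_j(y)` into
`F_n(y+1) - F_n(y)`, and `y C̃_k(y) - t C̃_k(y+1) = C̃_{k+1}(y) + k C̃_k(y)` together with the
triangular recurrence of `S` gives `F_{n+1}(y) = y F_n(y) - t F_n(y+1)`. Finally
`λ_k^{(n)} = k! S(n,k)`, because the recurrence defining `λ` is the binomial recurrence of `S` in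
the form `(k+1) S(n,k+1) = ∑_{j<n} C(n,j) S(j,k)`. -/

open Finset

section FallingFactorial

variable {R : Type*} [CommRing R]

theorem prod_range_succ_sub_natCast (k : ℕ) (y : R) :
    ∏ i ∈ range (k + 1), (y - i) = y * ∏ i ∈ range k, (y - 1 - i) := by
  rw [prod_range_succ', mul_comm]
  simp only [Nat.cast_add, Nat.cast_one, Nat.cast_zero, sub_zero, sub_add_eq_sub_sub_swap]

theorem prod_range_succ_add_one_sub_natCast (k : ℕ) (y : R) :
    ∏ i ∈ range (k + 1), (y + 1 - i) - ∏ i ∈ range (k + 1), (y - i)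
      = (k + 1) * ∏ i ∈ range k, (y - i) := by
  rw [prod_range_succ_sub_natCast k (y + 1), add_sub_cancel_right, prod_range_succ]
  ring

end FallingFactorial

namespace Nat

theorem stirlingSecond_succ_succ_eq_sum_choose_mul (n k : ℕ) :
    stirlingSecond (n + 1) (k + 1) = ∑ j ∈ range (n + 1), n.choose j * stirlingSecond j k := by
  induction n generalizing k with
  | zero => simp [stirlingSecond_succ_succ]
  | succ n ih =>
    have hsplit := sum_choose_succ_mul (R := ℕ) (fun j _ => stirlingSecond j k) n
    simp only [Nat.cast_id] at hsplit
    rw [hsplit, ← ih]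
    cases k with
    | zero => simp [stirlingSecond_one_right]
    | succ k =>
      simp only [stirlingSecond_succ_succ, mul_add, sum_add_distrib, ← ih,
        mul_left_comm _ (k + 1), ← mul_sum]
      ring

theorem succ_mul_stirlingSecond_succ_eq_sum_choose_mul (n k : ℕ) :
    (k + 1) * stirlingSecond n (k + 1) = ∑ j ∈ range n, n.choose j * stirlingSecond j k := by
  have h := stirlingSecond_succ_succ_eq_sum_choose_mul n k
  rw [sum_range_succ, choose_self, one_mul, stirlingSecond_succ_succ] at h
  omega

variable {R : Type*} [CommSemiring R]

theorem sum_range_stirlingSecond_mul_of_lt {n N : ℕ} (h : n < N) (g : ℕ → R) :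
    ∑ k ∈ range (n + 1), (stirlingSecond n k : R) * g k
      = ∑ k ∈ range N, (stirlingSecond n k : R) * g k := by
  refine sum_subset (range_subset_range.2 h) fun k _ hk => ?_
  rw [stirlingSecond_eq_zero_of_lt (by simpa using hk), Nat.cast_zero, zero_mul]

theorem sum_range_stirlingSecond_succ_mul (n : ℕ) (g : ℕ → R) :
    ∑ k ∈ range (n + 2), (stirlingSecond (n + 1) k : R) * g k
      = ∑ k ∈ range (n + 1), (stirlingSecond n k : R) * (g (k + 1) + k * g k) := by
  have hshift : ∑ k ∈ range (n + 1), (stirlingSecond n k : R) * (k * g k)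
      = ∑ k ∈ range (n + 1), ((k + 1) * stirlingSecond n (k + 1) : R) * g (k + 1) := by
    rw [sum_range_succ', sum_range_succ, stirlingSecond_eq_zero_of_lt n.lt_succ_self]
    simp only [Nat.cast_zero, Nat.cast_add, Nat.cast_one, zero_mul, mul_zero, add_zero]
    exact sum_congr rfl fun k _ => by ring
  simp only [mul_add, sum_add_distrib, hshift]
  rw [sum_range_succ', stirlingSecond_succ_zero, Nat.cast_zero, zero_mul, add_zero,
    ← sum_add_distrib]
  refine sum_congr rfl fun k _ => ?_
  rw [stirlingSecond_succ_succ]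
  push_cast
  ring

end Nat

section Charlier

variable (n : ℕ) (y t : ℝ)

@[simp]
theorem charlierM_zero : charlierM 0 y t = 1 := by
  simp [charlierM]

theorem charlierM_succ :
    charlierM (n + 1) y t = y * charlierM n (y - 1) t - t * charlierM n y t := by
  have hsplit := sum_choose_succ_mul (R := ℝ) (fun k m => (-t) ^ m * ∏ i ∈ range k, (y - i)) n
  simp only [charlierM, mul_assoc] at hsplit ⊢
  rw [hsplit, add_comm, sub_eq_add_neg, mul_sum, mul_sum, ← sum_neg_distrib]
  congr 1 <;> refine sum_congr rfl fun k hk => ?_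
  · rw [prod_range_succ_sub_natCast]
    ring
  · rw [Nat.sub_add_comm (mem_range_succ_iff.1 hk), pow_succ]
    ring

theorem charlierM_succ_add_one_sub :
    charlierM (n + 1) (y + 1) t - charlierM (n + 1) y t = (n + 1) * charlierM n y t := by
  simp only [charlierM, ← sum_sub_distrib, ← mul_sub, mul_sum]
  rw [sum_range_succ', prod_range_zero, prod_range_zero, sub_self, mul_zero, add_zero]
  refine sum_congr rfl fun k _ => ?_
  rw [prod_range_succ_add_one_sub_natCast, Nat.add_sub_add_right]
  have hchoose : ((n + 1).choose (k + 1) : ℝ) * (k + 1) = (n + 1) * n.choose k := by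
    exact_mod_cast (Nat.add_one_mul_choose_eq n k).symm
  linear_combination (-t) ^ (n - k) * (∏ i ∈ range k, (y - i)) * hchoose

theorem mul_charlierM_sub_mul_charlierM_add_one :
    y * charlierM n y t - t * charlierM n (y + 1) t
      = charlierM (n + 1) y t + n * charlierM n y t := by
  have hsucc := charlierM_succ n (y + 1) t
  rw [add_sub_cancel_right] at hsucc
  linear_combination charlierM_succ_add_one_sub n y t - hsucc

end Charlier

theorem bellΓ_succ (X : ℕ → ℝ) (n : ℕ) :
    bellΓ X (n + 1)
      = ∑ j ∈ range (n + 1), (n.choose j : ℝ) * bellΓ X j * X (n + 1 - j) := by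
  rw [bellΓ]
  exact sum_attach (range (n + 1)) fun j => (n.choose j : ℝ) * bellΓ X j * X (n + 1 - j)

theorem bellΓ_poisson_succ (x t : ℝ) (n : ℕ) :
    bellΓ (fun k => if k = 1 then x else -t) (n + 1)
      = x * bellΓ (fun k => if k = 1 then x else -t) n
        - t * ∑ j ∈ range n,
          (n.choose j : ℝ) * bellΓ (fun k => if k = 1 then x else -t) j := by
  rw [bellΓ_succ, sum_range_succ, Nat.choose_self, Nat.add_sub_cancel_left, if_pos rfl, mul_sum,
    sub_eq_add_neg, ← sum_neg_distrib, add_comm]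
  congr 1
  · rw [Nat.cast_one, one_mul, mul_comm]
  · refine sum_congr rfl fun j hj => ?_
    rw [if_neg (by have := mem_range.1 hj; omega)]
    ring

noncomputable def stirlingCharlier (t : ℝ) (n : ℕ) (y : ℝ) : ℝ :=
  ∑ k ∈ range (n + 1), (n.stirlingSecond k : ℝ) * charlierM k y t

theorem stirlingCharlier_succ (t : ℝ) (n : ℕ) (y : ℝ) :
    stirlingCharlier t (n + 1) y
      = y * stirlingCharlier t n y - t * stirlingCharlier t n (y + 1) := by
  simp only [stirlingCharlier, Nat.sum_range_stirlingSecond_succ_mul, mul_sum, ← sum_sub_distrib]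
  refine sum_congr rfl fun k _ => ?_
  linear_combination -(n.stirlingSecond k : ℝ) * mul_charlierM_sub_mul_charlierM_add_one k y t

theorem sum_range_choose_mul_stirlingCharlier (t : ℝ) (n : ℕ) (y : ℝ) :
    ∑ j ∈ range n, (n.choose j : ℝ) * stirlingCharlier t j y
      = stirlingCharlier t n (y + 1) - stirlingCharlier t n y := by
  have hswap : ∑ j ∈ range n, (n.choose j : ℝ) * stirlingCharlier t j y
      = ∑ k ∈ range n, ((k + 1) * n.stirlingSecond (k + 1) : ℕ) * charlierM k y t := by
    simp only [Nat.succ_mul_stirlingSecond_succ_eq_sum_choose_mul, Nat.cast_sum, Nat.cast_mul,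
      sum_mul]
    rw [sum_comm]
    refine sum_congr rfl fun j hj => ?_
    rw [stirlingCharlier, Nat.sum_range_stirlingSecond_mul_of_lt (mem_range.1 hj), mul_sum]
    exact sum_congr rfl fun k _ => by ring
  rw [hswap, stirlingCharlier, stirlingCharlier, ← sum_sub_distrib, sum_range_succ']
  simp only [charlierM_zero, sub_self, add_zero]
  refine sum_congr rfl fun k _ => ?_
  rw [← mul_sub, charlierM_succ_add_one_sub]
  push_cast
  ring

theorem bellΓ_poisson_eq_stirlingCharlier (x t : ℝ) (n : ℕ) :
    bellΓ (fun k => if k = 1 then x else -t) n = stirlingCharlier t n (x + t) := by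
  induction n using Nat.strong_induction_on with
  | _ n ih =>
    cases n with
    | zero => simp [bellΓ, stirlingCharlier]
    | succ n =>
      have hsum := sum_congr rfl fun j hj => congrArg (fun b => (n.choose j : ℝ) * b)
        (ih j (Nat.lt_succ_of_lt (mem_range.1 hj)))
      rw [bellΓ_poisson_succ, ih n n.lt_succ_self, hsum, sum_range_choose_mul_stirlingCharlier,
        stirlingCharlier_succ]
      ring

theorem lam_eq_factorial_mul_stirlingSecond :
    ∀ (k : ℕ) {n : ℕ}, 1 ≤ n → lam k n = k.factorial * n.stirlingSecond k
  | 0, n, hn => by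
    obtain ⟨m, rfl⟩ := Nat.exists_eq_add_of_le' hn
    simp [lam]
  | 1, n, hn => by
    obtain ⟨m, rfl⟩ := Nat.exists_eq_add_of_le' hn
    simp [lam, Nat.stirlingSecond_one_right]
  | k + 2, n, hn => by
    have hrec : ∀ j ∈ Icc (k + 1) (n - 1), (n.choose j : ℝ) * lam (k + 1) j
        = (k + 1).factorial * (n.choose j * j.stirlingSecond (k + 1)) := fun j hj => by
      rw [lam_eq_factorial_mul_stirlingSecond (k + 1) (Nat.le_of_add_left_le (mem_Icc.1 hj).1)]
      ring
    have hext : ∑ j ∈ Icc (k + 1) (n - 1), (n.choose j : ℝ) * j.stirlingSecond (k + 1)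
        = ∑ j ∈ range n, (n.choose j : ℝ) * j.stirlingSecond (k + 1) := by
      refine sum_subset (fun j hj => mem_range.2 (by simp only [mem_Icc] at hj; omega))
        fun j hj hj' => ?_
      have hjk : j < k + 1 := by
        simp only [mem_Icc, mem_range, not_and, not_le] at hj hj'
        omega
      rw [Nat.stirlingSecond_eq_zero_of_lt hjk, Nat.cast_zero, mul_zero]
    rw [lam, sum_congr rfl hrec, ← mul_sum, hext]
    rw_mod_cast [← Nat.succ_mul_stirlingSecond_succ_eq_sum_choose_mul, Nat.factorial_succ (k + 1)]
    ring

/-- The Poisson time–space harmonic polynomials `Γ_n(x,-t,…,-t)` expand in the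
(shifted, normalized) monic Charlier polynomials with coefficients `λ_j^{(n)}`. -/
theorem bell_poisson_charlier_expansion (x t : ℝ) (n : ℕ) (hn : 1 ≤ n) :
    bellΓ (fun k => if k = 1 then x else -t) n =
      ∑ j ∈ Finset.Icc 1 n, lam j n * ((1 : ℝ) / j.factorial) * charlierM j (x + t) t := by
  have hterm : ∀ j ∈ Icc 1 n, lam j n * ((1 : ℝ) / j.factorial) * charlierM j (x + t) t
      = n.stirlingSecond j * charlierM j (x + t) t := fun j _ => by
    rw [lam_eq_factorial_mul_stirlingSecond j hn]
    field_simp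
  have hzero : ∀ j ∈ range (n + 1), j ∉ Icc 1 n →
      (n.stirlingSecond j : ℝ) * charlierM j (x + t) t = 0 := fun j hj hj' => by
    obtain rfl : j = 0 := by simp only [mem_Icc, mem_range, not_and, not_le] at hj hj'; omega
    obtain ⟨m, rfl⟩ := Nat.exists_eq_add_of_le' hn
    simp
  rw [bellΓ_poisson_eq_stirlingCharlier, sum_congr rfl hterm, stirlingCharlier,
    sum_subset (fun j hj => mem_range.2 (by simp only [mem_Icc] at hj; omega)) hzero]
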